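/- If C is a real n×n matrix with CᵀC = CCᵀ = α²I for some α with 0 < α < 1, and Σ₁, Σ₂ are diagonal positive definite n×n matrices, then with γ = 1/(1−α²) and Σ_C = [[I, Cᵀ],[C, I]], Σ_q = bdiag(Σ₁,Σ₂), μ = (μ₁; μ₂): ½[ln(det Σ_C/det Σ_q) − 2n + μᵀΣ_C⁻¹μ + tr(Σ_C⁻¹Σ_q)] = ½[γμ₁ᵀμ₁ − ln det Σ₁ − n + γ tr Σ₁] + ½[γμ₂ᵀμ₂ − ln det Σ₂ − n + γ tr Σ₂] − ½[n ln γ + 2γ μ₁ᵀCᵀμ₂]. -/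

import Mathlib

/-!
Since `CᵀC = CCᵀ = α² I`, multiplying `Σ_C = [[I, Cᵀ], [C, I]]` by `[[I, -Cᵀ], [-C, I]]` gives
`(1 - α²) I`, and the Schur complement gives `det Σ_C = det (I - CᵀC) = (1 - α²)ⁿ`. With
`Σ_C⁻¹ = γ [[I, -Cᵀ], [-C, I]]` the quadratic form and the trace split blockwise, the off-diagonal
blocks contributing `-2γ μ₁ᵀCᵀμ₂` and nothing, respectively.
-/

open Matrix

namespace Matrix

variable {m n R : Type*}

theorem one_sub_smul_one [DecidableEq m] [Ring R] (a : R) :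
    (1 : Matrix m m R) - a • 1 = (1 - a) • 1 := by
  rw [sub_smul, one_smul]

variable [Fintype m] [Fintype n]

theorem trace_fromBlocks [AddCommMonoid R] (A : Matrix m m R) (B : Matrix m n R)
    (C : Matrix n m R) (D : Matrix n n R) :
    (fromBlocks A B C D).trace = A.trace + D.trace := by
  simp [trace, Fintype.sum_sum_type]

variable [DecidableEq m] [DecidableEq n]

theorem trace_fromBlocks_one_one_mul_fromBlocks_zero_zero [Semiring R] (B : Matrix m n R)
    (C : Matrix n m R) (S₁ : Matrix m m R) (S₂ : Matrix n n R) :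
    (fromBlocks 1 B C 1 * fromBlocks S₁ 0 0 S₂).trace = S₁.trace + S₂.trace := by
  simp [fromBlocks_multiply, trace_fromBlocks]

theorem det_fromBlocks_one_one_of_mul_eq_smul [CommRing R] {B : Matrix m n R}
    {C : Matrix n m R} {a : R} (h : B * C = a • 1) :
    (fromBlocks 1 B C 1).det = (1 - a) ^ Fintype.card m := by
  rw [det_fromBlocks_one₂₂, h, one_sub_smul_one, det_smul, det_one, mul_one]

theorem fromBlocks_one_one_mul_fromBlocks_one_neg_neg_one [Ring R] (B : Matrix m n R)
    (C : Matrix n m R) :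
    fromBlocks 1 B C 1 * fromBlocks 1 (-B) (-C) 1 = fromBlocks (1 - B * C) 0 0 (1 - C * B) := by
  simp [fromBlocks_multiply, sub_eq_add_neg, add_comm]

theorem inv_fromBlocks_one_one_of_mul_eq_smul [Field R] {B : Matrix m n R}
    {C : Matrix n m R} {a : R} (h₁ : B * C = a • 1) (h₂ : C * B = a • 1) (ha : a ≠ 1) :
    (fromBlocks 1 B C 1)⁻¹ = (1 - a)⁻¹ • fromBlocks 1 (-B) (-C) 1 := by
  refine inv_eq_right_inv ?_
  have hscalar : fromBlocks ((1 - a) • 1) 0 0 ((1 - a) • 1)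
      = (1 - a) • (1 : Matrix (m ⊕ n) (m ⊕ n) R) := by
    rw [← fromBlocks_one, fromBlocks_smul, smul_zero, smul_zero]
  rw [Matrix.mul_smul, fromBlocks_one_one_mul_fromBlocks_one_neg_neg_one, h₁, h₂,
    one_sub_smul_one, one_sub_smul_one, hscalar, smul_smul,
    inv_mul_cancel₀ (sub_ne_zero.2 ha.symm), one_smul]

theorem sumElim_dotProduct_fromBlocks_one_neg_transpose_mulVec [CommRing R]
    (C : Matrix n m R) (x : m → R) (y : n → R) :
    Sum.elim x y ⬝ᵥ fromBlocks 1 (-Cᵀ) (-C) 1 *ᵥ Sum.elim x y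
      = x ⬝ᵥ x + y ⬝ᵥ y - 2 * (x ⬝ᵥ Cᵀ *ᵥ y) := by
  have hsymm : y ⬝ᵥ C *ᵥ x = x ⬝ᵥ Cᵀ *ᵥ y := by
    rw [dotProduct_mulVec, ← mulVec_transpose, dotProduct_comm]
  simp only [fromBlocks_mulVec, sumElim_dotProduct_sumElim, one_mulVec, neg_mulVec,
    dotProduct_add, dotProduct_neg, Sum.elim_comp_inl, Sum.elim_comp_inr, hsymm]
  ring

end Matrix

theorem stmt_19_general {n : ℕ} (C : Matrix (Fin n) (Fin n) ℝ) (α : ℝ)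
    (hα : 0 < α) (hα1 : α < 1)
    (hC₁ : Cᵀ * C = α ^ 2 • 1) (hC₂ : C * Cᵀ = α ^ 2 • 1)
    (S₁ S₂ : Matrix (Fin n) (Fin n) ℝ)
    (hS₁ : S₁.PosDef) (hS₂ : S₂.PosDef)
    (μ₁ μ₂ : Fin n → ℝ) :
    (1 / 2) * (Real.log ((Matrix.fromBlocks 1 Cᵀ C 1).det /
          (Matrix.fromBlocks S₁ 0 0 S₂).det) - 2 * n +
        Sum.elim μ₁ μ₂ ⬝ᵥ (Matrix.fromBlocks 1 Cᵀ C 1)⁻¹ *ᵥ Sum.elim μ₁ μ₂ +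
        ((Matrix.fromBlocks 1 Cᵀ C 1)⁻¹ * Matrix.fromBlocks S₁ 0 0 S₂).trace) =
      (1 / 2) * ((1 / (1 - α ^ 2)) * (μ₁ ⬝ᵥ μ₁) - Real.log S₁.det - n +
          (1 / (1 - α ^ 2)) * S₁.trace) +
        (1 / 2) * ((1 / (1 - α ^ 2)) * (μ₂ ⬝ᵥ μ₂) - Real.log S₂.det - n +
          (1 / (1 - α ^ 2)) * S₂.trace) -
        (1 / 2) * (n * Real.log (1 / (1 - α ^ 2)) +
          2 * (1 / (1 - α ^ 2)) * (μ₁ ⬝ᵥ Cᵀ *ᵥ μ₂)) := by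
  have hβ : 0 < 1 - α ^ 2 := by nlinarith
  rw [inv_fromBlocks_one_one_of_mul_eq_smul hC₁ hC₂ (by linarith), smul_mulVec, dotProduct_smul,
    sumElim_dotProduct_fromBlocks_one_neg_transpose_mulVec, smul_mul, trace_smul,
    trace_fromBlocks_one_one_mul_fromBlocks_zero_zero, det_fromBlocks_one_one_of_mul_eq_smul hC₁,
    det_fromBlocks_zero₂₁, Fintype.card_fin, Real.log_div (by positivity)
      (mul_pos hS₁.det_pos hS₂.det_pos).ne',
    Real.log_pow, Real.log_mul hS₁.det_pos.ne' hS₂.det_pos.ne']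
  simp only [one_div, Real.log_inv, smul_eq_mul]
  ring

/-- Simplification of the Gaussian KL-divergence expression under the
scaled-orthogonality assumption `Cᵀ C = C Cᵀ = α² I`. -/
theorem stmt_19 {n : ℕ} (C : Matrix (Fin n) (Fin n) ℝ) (α : ℝ)
    (hα : 0 < α) (hα1 : α < 1)
    (hC₁ : Cᵀ * C = α ^ 2 • 1) (hC₂ : C * Cᵀ = α ^ 2 • 1)
    (S₁ S₂ : Matrix (Fin n) (Fin n) ℝ)
    (hS₁d : S₁.IsDiag) (hS₂d : S₂.IsDiag) (hS₁ : S₁.PosDef) (hS₂ : S₂.PosDef)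
    (μ₁ μ₂ : Fin n → ℝ) :
    (1 / 2) * (Real.log ((Matrix.fromBlocks 1 Cᵀ C 1).det /
          (Matrix.fromBlocks S₁ 0 0 S₂).det) - 2 * n +
        Sum.elim μ₁ μ₂ ⬝ᵥ (Matrix.fromBlocks 1 Cᵀ C 1)⁻¹ *ᵥ Sum.elim μ₁ μ₂ +
        ((Matrix.fromBlocks 1 Cᵀ C 1)⁻¹ * Matrix.fromBlocks S₁ 0 0 S₂).trace) =
      (1 / 2) * ((1 / (1 - α ^ 2)) * (μ₁ ⬝ᵥ μ₁) - Real.log S₁.det - n +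
          (1 / (1 - α ^ 2)) * S₁.trace) +
        (1 / 2) * ((1 / (1 - α ^ 2)) * (μ₂ ⬝ᵥ μ₂) - Real.log S₂.det - n +
          (1 / (1 - α ^ 2)) * S₂.trace) -
        (1 / 2) * (n * Real.log (1 / (1 - α ^ 2)) +
          2 * (1 / (1 - α ^ 2)) * (μ₁ ⬝ᵥ Cᵀ *ᵥ μ₂)) :=
  stmt_19_general C α hα hα1 hC₁ hC₂ S₁ S₂ hS₁ hS₂ μ₁ μ₂
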